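/- arXiv:0907.3704 — 3 statements merged into one kernel-verified Lean document; each statement's English description precedes it below -/
import Mathlib

section
/- Min-entropy uncertainty relation: for any two orthonormal bases A and B of ℂ^d and any unit vector |ψ⟩, (1/2)(H_∞(A||ψ⟩) + H_∞(B||ψ⟩)) ≥ -log((1 + c(A,B))/2), equivalently (max_a |⟨a|ψ⟩|^2)(max_b |⟨b|ψ⟩|^2) ≤ ((1+c(A,B))/2)^2. -/
/-!
Let `a`, `b` be basis vectors at which `|⟨a|ψ⟩|²` and `|⟨b|ψ⟩|²` are maximal, with values `P`, `Q`.
For `φ = ⟨a|ψ⟩ a + ⟨b|ψ⟩ b` one has `P + Q = ⟨φ|ψ⟩ ≤ ‖φ‖` while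
`‖φ‖² ≤ (1 + |⟨a|b⟩|)(P + Q)`, hence `P + Q ≤ 1 + c(A,B)`, and AM-GM gives
`PQ ≤ ((1 + c(A,B))/2)²`. Taking logarithms gives the entropic form; the logarithms are
not junk because Parseval forces `P, Q > 0`.
-/

noncomputable section

/-- Min-entropy. -/
def minEntropy {X : Type*} [Fintype X] [Nonempty X] (p : X → ℝ) : ℝ :=
  -Real.log (⨆ x, p x)

/-- Probability of outcome `x` when measuring the pure state `ψ` in the basis `B`. -/
def measProb {d : ℕ} (B : Fin d → EuclideanSpace ℂ (Fin d))
    (ψ : EuclideanSpace ℂ (Fin d)) (x : Fin d) : ℝ :=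
  ‖(inner ℂ (B x) ψ : ℂ)‖ ^ 2

open scoped InnerProductSpace

section InnerProductSpace

variable {𝕜 E : Type*} [RCLike 𝕜] [NormedAddCommGroup E] [InnerProductSpace 𝕜 E]

theorem norm_smul_add_smul_sq_le {a b : E} (ha : ‖a‖ = 1) (hb : ‖b‖ = 1) (α β : 𝕜) :
    ‖α • a + β • b‖ ^ 2 ≤ (1 + ‖⟪a, b⟫_𝕜‖) * (‖α‖ ^ 2 + ‖β‖ ^ 2) := by
  have hcross : RCLike.re ⟪α • a, β • b⟫_𝕜 ≤ ‖α‖ * ‖β‖ * ‖⟪a, b⟫_𝕜‖ :=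
    calc RCLike.re ⟪α • a, β • b⟫_𝕜 ≤ ‖⟪α • a, β • b⟫_𝕜‖ := RCLike.re_le_norm _
      _ = ‖α‖ * ‖β‖ * ‖⟪a, b⟫_𝕜‖ := by
        rw [inner_smul_left, inner_smul_right, norm_mul, norm_mul, RCLike.norm_conj, mul_assoc]
  rw [norm_add_sq (𝕜 := 𝕜), norm_smul, norm_smul, ha, hb, mul_one, mul_one]
  nlinarith [sq_nonneg (‖α‖ - ‖β‖), norm_nonneg α, norm_nonneg β, norm_nonneg ⟪a, b⟫_𝕜]

theorem sq_norm_inner_add_sq_norm_inner_le {a b : E} (ha : ‖a‖ = 1) (hb : ‖b‖ = 1) (x : E) :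
    ‖⟪a, x⟫_𝕜‖ ^ 2 + ‖⟪b, x⟫_𝕜‖ ^ 2 ≤ (1 + ‖⟪a, b⟫_𝕜‖) * ‖x‖ ^ 2 := by
  set s := ‖⟪a, x⟫_𝕜‖ ^ 2 + ‖⟪b, x⟫_𝕜‖ ^ 2
  set φ := ⟪a, x⟫_𝕜 • a + ⟪b, x⟫_𝕜 • b
  have hφx : ⟪φ, x⟫_𝕜 = s := by
    simp only [φ, s, inner_add_left, inner_smul_left, RCLike.conj_mul, RCLike.ofReal_add,
      RCLike.ofReal_pow]
  have hs_le : s ≤ ‖φ‖ * ‖x‖ :=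
    calc s = RCLike.re ⟪φ, x⟫_𝕜 := by rw [hφx, RCLike.ofReal_re]
      _ ≤ ‖⟪φ, x⟫_𝕜‖ := RCLike.re_le_norm _
      _ ≤ ‖φ‖ * ‖x‖ := norm_inner_le_norm _ _
  have hs_sq : s * s ≤ s * ((1 + ‖⟪a, b⟫_𝕜‖) * ‖x‖ ^ 2) :=
    calc s * s ≤ (‖φ‖ * ‖x‖) ^ 2 := by nlinarith [show 0 ≤ s by positivity]
      _ = ‖φ‖ ^ 2 * ‖x‖ ^ 2 := mul_pow _ _ _
      _ ≤ (1 + ‖⟪a, b⟫_𝕜‖) * s * ‖x‖ ^ 2 := by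
        gcongr; exact norm_smul_add_smul_sq_le ha hb _ _
      _ = s * ((1 + ‖⟪a, b⟫_𝕜‖) * ‖x‖ ^ 2) := by ring
  rcases (show 0 ≤ s by positivity).eq_or_lt with hs | hs
  · rw [← hs]; positivity
  · exact le_of_mul_le_mul_left hs_sq hs

theorem Orthonormal.sum_sq_norm_inner_right [FiniteDimensional 𝕜 E] {ι : Type*} [Fintype ι]
    {v : ι → E} (hv : Orthonormal 𝕜 v) (hcard : Fintype.card ι = Module.finrank 𝕜 E) (x : E) :
    ∑ i, ‖⟪v i, x⟫_𝕜‖ ^ 2 = ‖x‖ ^ 2 := by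
  simpa using (OrthonormalBasis.mk hv
    (hv.linearIndependent.span_eq_top_of_card_eq_finrank' hcard).ge).sum_sq_norm_inner_right x

end InnerProductSpace

theorem neg_log_le_half_add_neg_log {p q m : ℝ} (hp : 0 < p) (hq : 0 < q)
    (hpq : p * q ≤ m ^ 2) : -Real.log m ≤ (1 / 2) * (-Real.log p + -Real.log q) := by
  have hlog : Real.log (p * q) ≤ Real.log (m ^ 2) := Real.log_le_log (by positivity) hpq
  rw [Real.log_mul hp.ne' hq.ne', Real.log_pow] at hlog
  push_cast at hlog
  linarith

theorem mul_le_sq_half_of_add_le {p q s : ℝ} (hp : 0 ≤ p) (hq : 0 ≤ q) (hpq : p + q ≤ s) :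
    p * q ≤ (s / 2) ^ 2 :=
  calc p * q ≤ ((p + q) / 2) ^ 2 := by linarith [four_mul_le_sq_add p q]
    _ ≤ (s / 2) ^ 2 := by gcongr

theorem measProb_nonneg {d : ℕ} (B : Fin d → EuclideanSpace ℂ (Fin d))
    (ψ : EuclideanSpace ℂ (Fin d)) (x : Fin d) : 0 ≤ measProb B ψ x :=
  sq_nonneg _

theorem measProb_add_measProb_le {d : ℕ} {A B : Fin d → EuclideanSpace ℂ (Fin d)}
    (hA : Orthonormal ℂ A) (hB : Orthonormal ℂ B) {ψ : EuclideanSpace ℂ (Fin d)} (hψ : ‖ψ‖ = 1)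
    (a b : Fin d) : measProb A ψ a + measProb B ψ b ≤ 1 + ‖⟪A a, B b⟫_ℂ‖ := by
  have := sq_norm_inner_add_sq_norm_inner_le (𝕜 := ℂ) (hA.1 a) (hB.1 b) ψ
  rwa [hψ, one_pow, mul_one] at this

theorem sum_measProb {d : ℕ} {B : Fin d → EuclideanSpace ℂ (Fin d)} (hB : Orthonormal ℂ B)
    (ψ : EuclideanSpace ℂ (Fin d)) : ∑ x, measProb B ψ x = ‖ψ‖ ^ 2 :=
  hB.sum_sq_norm_inner_right (by simp) ψ

theorem iSup_measProb_pos {d : ℕ} {B : Fin d → EuclideanSpace ℂ (Fin d)} (hB : Orthonormal ℂ B)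
    {ψ : EuclideanSpace ℂ (Fin d)} (hψ : ψ ≠ 0) : 0 < ⨆ x, measProb B ψ x := by
  obtain ⟨x, -, hx⟩ : ∃ x ∈ Finset.univ, measProb B ψ x ≠ 0 :=
    Finset.exists_ne_zero_of_sum_ne_zero (by rw [sum_measProb hB]; positivity)
  exact ((measProb_nonneg B ψ x).lt_of_ne' hx).trans_le (Finite.le_ciSup (measProb B ψ) x)

/-- Min-entropy uncertainty relation: for orthonormal bases `A`, `B` of `ℂ^d` and a unit
vector `ψ`, `(1/2)(H_∞(A|ψ) + H_∞(B|ψ)) ≥ -log((1 + c(A,B))/2)`; equivalently,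
`(max_a |⟨a|ψ⟩|²)(max_b |⟨b|ψ⟩|²) ≤ ((1 + c(A,B))/2)²`. -/
theorem min_entropy_uncertainty {d : ℕ} (hd : 0 < d)
    (A B : Fin d → EuclideanSpace ℂ (Fin d))
    (hA : Orthonormal ℂ A) (hB : Orthonormal ℂ B)
    (ψ : EuclideanSpace ℂ (Fin d)) (hψ : ‖ψ‖ = 1) :
    haveI : Nonempty (Fin d) := ⟨⟨0, hd⟩⟩
    (-Real.log ((1 + ⨆ kl : Fin d × Fin d, ‖(inner ℂ (A kl.1) (B kl.2) : ℂ)‖) / 2) ≤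
      (1 / 2) * (minEntropy (measProb A ψ) + minEntropy (measProb B ψ))) ∧
    ((⨆ a, measProb A ψ a) * (⨆ b, measProb B ψ b) ≤
      ((1 + ⨆ kl : Fin d × Fin d, ‖(inner ℂ (A kl.1) (B kl.2) : ℂ)‖) / 2) ^ 2) := by
  have : Nonempty (Fin d) := ⟨⟨0, hd⟩⟩
  set c := ⨆ kl : Fin d × Fin d, ‖(inner ℂ (A kl.1) (B kl.2) : ℂ)‖
  obtain ⟨a, hPa⟩ := exists_eq_ciSup_of_finite (f := measProb A ψ)
  obtain ⟨b, hQb⟩ := exists_eq_ciSup_of_finite (f := measProb B ψ)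
  have hab : ‖⟪A a, B b⟫_ℂ‖ ≤ c :=
    Finite.le_ciSup (fun kl : Fin d × Fin d ↦ ‖⟪A kl.1, B kl.2⟫_ℂ‖) (a, b)
  have hprod : (⨆ a, measProb A ψ a) * (⨆ b, measProb B ψ b) ≤ ((1 + c) / 2) ^ 2 := by
    rw [← hPa, ← hQb]
    refine mul_le_sq_half_of_add_le (measProb_nonneg A ψ a) (measProb_nonneg B ψ b) ?_
    linarith [measProb_add_measProb_le hA hB hψ a b]
  have hψ0 : ψ ≠ 0 := norm_ne_zero_iff.mp (by rw [hψ]; exact one_ne_zero)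
  exact ⟨neg_log_le_half_add_neg_log (iSup_measProb_pos hA hψ0) (iSup_measProb_pos hB hψ0) hprod,
    hprod⟩
end
end

section
/- For two mutually unbiased bases of ℂ^2 (e.g., the computational basis {|0⟩,|1⟩} and Hadamard basis {|+⟩,|−⟩}), the state |ψ⟩ = cos(π/8)|0⟩ + sin(π/8)|1⟩ attains equality in the min-entropy uncertainty relation: (1/2)(H_∞(A||ψ⟩) + H_∞(B||ψ⟩)) = -log(1/2 + 1/(2√2)). -/
/-!
The Hadamard basis is the computational basis rotated by `π/4`, so measuring the real state
`cos θ |0⟩ + sin θ |1⟩` in the Hadamard basis gives the computational-basis distribution of the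
state at angle `θ - π/4`. At `θ = π/8` both distributions are therefore
`(cos² (π/8), sin² (π/8))`, whose larger weight is `cos² (π/8) = 1/2 + 1/(2√2)`.
-/

noncomputable section

open Real

/-- The computational basis of ℂ². -/
def compBasis : Fin 2 → EuclideanSpace ℂ (Fin 2) := fun i => EuclideanSpace.single i 1

/-- The Hadamard basis {|+⟩, |−⟩} of ℂ². -/
def hadBasis : Fin 2 → EuclideanSpace ℂ (Fin 2) := fun j =>
  (WithLp.equiv 2 (Fin 2 → ℂ)).symm
    ![((Real.sqrt 2)⁻¹ : ℂ), if j = 0 then ((Real.sqrt 2)⁻¹ : ℂ) else -((Real.sqrt 2)⁻¹ : ℂ)]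

/-- The state cos(π/8)|0⟩ + sin(π/8)|1⟩. -/
def optState : EuclideanSpace ℂ (Fin 2) :=
  (WithLp.equiv 2 (Fin 2 → ℂ)).symm
    ![(Real.cos (π / 8) : ℂ), (Real.sin (π / 8) : ℂ)]

lemma minEntropy_eq_neg_log_of_forall_le {X : Type*} [Fintype X] [Nonempty X] {p : X → ℝ}
    {x₀ : X} (h : ∀ x, p x ≤ p x₀) : minEntropy p = -log (p x₀) := by
  rw [minEntropy, le_antisymm (ciSup_le h) (le_ciSup (Finite.bddAbove_range p) x₀)]

lemma inner_hadBasis_zero (ψ : EuclideanSpace ℂ (Fin 2)) :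
    inner ℂ (hadBasis 0) ψ = (√2)⁻¹ * (ψ 0 + ψ 1) := by
  simp [hadBasis, inner, Fin.sum_univ_two, mul_comm, mul_add]

lemma inner_hadBasis_one (ψ : EuclideanSpace ℂ (Fin 2)) :
    inner ℂ (hadBasis 1) ψ = (√2)⁻¹ * (ψ 0 - ψ 1) := by
  simp [hadBasis, inner, Fin.sum_univ_two, mul_comm, mul_add, sub_eq_add_neg]

lemma inv_sqrt_two_mul_cos_add_sin (θ : ℝ) : (√2)⁻¹ * (cos θ + sin θ) = cos (θ - π / 4) := by
  rw [cos_sub, cos_pi_div_four, sin_pi_div_four]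
  field_simp
  rw [sq_sqrt zero_le_two]
  ring

lemma inv_sqrt_two_mul_cos_sub_sin (θ : ℝ) : (√2)⁻¹ * (cos θ - sin θ) = -sin (θ - π / 4) := by
  rw [sin_sub, cos_pi_div_four, sin_pi_div_four]
  field_simp
  rw [sq_sqrt zero_le_two]
  ring

def realState (θ : ℝ) : EuclideanSpace ℂ (Fin 2) :=
  (WithLp.equiv 2 (Fin 2 → ℂ)).symm ![(cos θ : ℂ), (sin θ : ℂ)]

section realState

variable (θ : ℝ)

lemma realState_zero : realState θ 0 = cos θ := rfl

lemma realState_one : realState θ 1 = sin θ := rfl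

lemma inner_compBasis_realState_zero : inner ℂ (compBasis 0) (realState θ) = cos θ := by
  simp [compBasis, EuclideanSpace.inner_single_left, realState_zero]

lemma inner_compBasis_realState_one : inner ℂ (compBasis 1) (realState θ) = sin θ := by
  simp [compBasis, EuclideanSpace.inner_single_left, realState_one]

lemma inner_hadBasis_realState_zero :
    inner ℂ (hadBasis 0) (realState θ) = cos (θ - π / 4) := by
  rw [inner_hadBasis_zero, realState_zero, realState_one, ← inv_sqrt_two_mul_cos_add_sin]
  push_cast
  rfl

lemma inner_hadBasis_realState_one :
    inner ℂ (hadBasis 1) (realState θ) = ((-sin (θ - π / 4) : ℝ) : ℂ) := by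
  rw [inner_hadBasis_one, realState_zero, realState_one, ← inv_sqrt_two_mul_cos_sub_sin]
  push_cast
  rfl

lemma measProb_compBasis_realState :
    measProb compBasis (realState θ) = ![cos θ ^ 2, sin θ ^ 2] := by
  rw [funext_iff, Fin.forall_fin_two]
  simp only [measProb, inner_compBasis_realState_zero, inner_compBasis_realState_one,
    Complex.norm_real, norm_eq_abs, sq_abs]
  exact ⟨rfl, rfl⟩

lemma measProb_hadBasis_realState :
    measProb hadBasis (realState θ) = measProb compBasis (realState (θ - π / 4)) := by
  rw [funext_iff, Fin.forall_fin_two]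
  simp only [measProb, inner_compBasis_realState_zero, inner_compBasis_realState_one,
    inner_hadBasis_realState_zero, inner_hadBasis_realState_one, Complex.norm_real, norm_neg,
    and_self]

end realState

lemma minEntropy_fin_two_of_le {a b : ℝ} (h : b ≤ a) : minEntropy ![a, b] = -log a :=
  minEntropy_eq_neg_log_of_forall_le (x₀ := 0) (Fin.forall_fin_two.2 ⟨le_rfl, h⟩)

lemma cos_sq_pi_div_eight : cos (π / 8) ^ 2 = 1 / 2 + 1 / (2 * √2) := by
  rw [cos_sq, show 2 * (π / 8) = π / 4 by ring, cos_pi_div_four]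
  field_simp
  linear_combination sq_sqrt (zero_le_two : (0 : ℝ) ≤ 2)

lemma sin_sq_le_cos_sq_pi_div_eight : sin (π / 8) ^ 2 ≤ cos (π / 8) ^ 2 := by
  rw [← sub_nonneg, ← cos_two_mul', show 2 * (π / 8) = π / 4 by ring, cos_pi_div_four]
  positivity

lemma optState_eq_realState : optState = realState (π / 8) := rfl

/-- For the computational and Hadamard bases of ℂ², the state
`cos(π/8)|0⟩ + sin(π/8)|1⟩` attains equality in the min-entropy uncertainty relation:
`(1/2)(H_∞(A|ψ) + H_∞(B|ψ)) = -log(1/2 + 1/(2√2))`. -/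
theorem min_entropy_uncertainty_tight :
    (1 / 2) * (minEntropy (measProb compBasis optState)
        + minEntropy (measProb hadBasis optState))
      = -Real.log (1 / 2 + 1 / (2 * Real.sqrt 2)) := by
  have hA : measProb compBasis optState = ![cos (π / 8) ^ 2, sin (π / 8) ^ 2] :=
    measProb_compBasis_realState _
  have hB : measProb hadBasis optState = ![cos (π / 8) ^ 2, sin (π / 8) ^ 2] := by
    rw [optState_eq_realState, measProb_hadBasis_realState, measProb_compBasis_realState,
      show π / 8 - π / 4 = -(π / 8) by ring, cos_neg, sin_neg, neg_sq]
  rw [hA, hB, minEntropy_fin_two_of_le sin_sq_le_cos_sq_pi_div_eight, cos_sq_pi_div_eight]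
  ring
end
end

section
/- Collision-entropy uncertainty relation for MUBs: for any L mutually unbiased bases B_1,...,B_L of ℂ^d with d = 2^n and any pure state |Ψ⟩, (1/L) Σ_{b=1}^L H_2(B_b||Ψ⟩) ≥ −log((L + d − 1)/(dL)). Equivalently, Σ_b Σ_x |⟨x_b|Ψ⟩|^4 ≤ (L + d − 1)/d. -/
/-!
View operators on `ℂ^d` as vectors of the Hilbert–Schmidt space `ℂ^(d × d)`. The projectors
`P_{b,x} = |x_b⟩⟨x_b|` of mutually unbiased bases have Gram matrix `δ_{x x'}` within a basis and
`1/d` across bases. For `ρ = |Ψ⟩⟨Ψ|` let `p_{b,x} = ⟨P_{b,x}, ρ⟩` and `c_{b,x} = p_{b,x} - 1/d`;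
the `c_{b,x}` sum to zero over each basis, so the cross-basis Gram entries drop out and
`B = ∑ c_{b,x} P_{b,x}` has `⟨P_{b,x}, B⟩ = c_{b,x} = ⟨P_{b,x}, ρ - I/d⟩`. Hence `B` is the
orthogonal projection of `ρ - I/d` onto the span of the projectors, and
`∑ c² = ‖B‖² ≤ ‖ρ - I/d‖² = 1 - 1/d`. As `∑_x p_{b,x}² = ∑_x c_{b,x}² + 1/d`, summing over the
`L` bases gives `∑_b ∑_x p_{b,x}² ≤ (L + d - 1)/d`; the entropy form follows by concavity of `log`.
-/

open RCLike
open scoped InnerProductSpace ComplexConjugate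

theorem Orthonormal.sum_sq_norm_inner_of_card_eq_finrank {𝕜 E ι : Type*} [RCLike 𝕜]
    [NormedAddCommGroup E] [InnerProductSpace 𝕜 E] [FiniteDimensional 𝕜 E] [Fintype ι]
    {v : ι → E} (hv : Orthonormal 𝕜 v) (hcard : Fintype.card ι = Module.finrank 𝕜 E) (x : E) :
    ∑ i, ‖⟪v i, x⟫_𝕜‖ ^ 2 = ‖x‖ ^ 2 := by
  simpa using (OrthonormalBasis.mk hv
    (hv.linearIndependent.span_eq_top_of_card_eq_finrank' hcard).ge).sum_sq_norm_inner_right x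

theorem Orthonormal.sum_norm_inner_pow_four_pos {𝕜 E ι : Type*} [RCLike 𝕜]
    [NormedAddCommGroup E] [InnerProductSpace 𝕜 E] [FiniteDimensional 𝕜 E] [Fintype ι]
    {v : ι → E} (hv : Orthonormal 𝕜 v) (hcard : Fintype.card ι = Module.finrank 𝕜 E)
    {x : E} (hx : x ≠ 0) : 0 < ∑ i, ‖⟪v i, x⟫_𝕜‖ ^ 4 := by
  have hchebyshev := sq_sum_le_card_mul_sum_sq (s := Finset.univ) (f := fun i => ‖⟪v i, x⟫_𝕜‖ ^ 2)
  rw [hv.sum_sq_norm_inner_of_card_eq_finrank hcard] at hchebyshev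
  simp only [← pow_mul, Nat.reduceMul] at hchebyshev
  have hx4 : 0 < ‖x‖ ^ 4 := by positivity
  exact pos_of_mul_pos_right (hx4.trans_le hchebyshev) (by positivity)

section OrthogonalProjection

variable {𝕜 E ι : Type*} [RCLike 𝕜] [NormedAddCommGroup E] [InnerProductSpace 𝕜 E] [Fintype ι]

theorem sum_sq_le_norm_sq_of_inner_eq {u : ι → E} {c : ι → ℝ} {a : E}
    (ha : ∀ i, ⟪u i, a⟫_𝕜 = c i) (hc : ∀ i, ⟪u i, ∑ j, (c j : 𝕜) • u j⟫_𝕜 = c i) :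
    ∑ i, c i ^ 2 ≤ ‖a‖ ^ 2 := by
  set B := ∑ j, (c j : 𝕜) • u j
  -- `a - B` is orthogonal to every `u i`, so `B` is the orthogonal projection of `a`.
  have inner_B : ∀ x, (∀ i, ⟪u i, x⟫_𝕜 = c i) → ⟪B, x⟫_𝕜 = ((∑ i, c i ^ 2 : ℝ) : 𝕜) := by
    intro x hx
    simp [B, sum_inner, inner_smul_left, hx, sq]
  have hBa := congrArg re (inner_B a ha)
  have hBB := congrArg re (inner_B B hc)
  rw [inner_re_symm, ofReal_re] at hBa
  rw [inner_self_eq_norm_sq, ofReal_re] at hBB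
  have := norm_sub_sq (𝕜 := 𝕜) a B
  nlinarith [sq_nonneg ‖a - B‖]

theorem inner_sum_smul_of_block_gram {κ : Type*} [Fintype κ] [DecidableEq κ] [DecidableEq ι]
    {u : κ × ι → E} {r : 𝕜}
    (hu : ∀ q q', ⟪u q, u q'⟫_𝕜 = if q.1 = q'.1 then (if q = q' then 1 else 0) else r)
    {c : κ × ι → ℝ} (hc : ∀ b, ∑ x, c (b, x) = 0) (q : κ × ι) :
    ⟪u q, ∑ q', (c q' : 𝕜) • u q'⟫_𝕜 = c q := by
  have hc' : ∀ b, ∑ x, (c (b, x) : 𝕜) = 0 := fun b => by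
    exact_mod_cast congrArg (ofReal : ℝ → 𝕜) (hc b)
  simp_rw [inner_sum, inner_smul_right, hu, Fintype.sum_prod_type, mul_ite, mul_one, mul_zero]
  rw [Finset.sum_eq_single q.1]
  · simp [Prod.ext_iff]
  · intro b _ hb
    simp [Ne.symm hb, ← Finset.sum_mul, hc']
  · simp

end OrthogonalProjection

theorem sum_sub_one_div_card_sq {ι : Type*} [Fintype ι] {p : ι → ℝ} (hp : ∑ x, p x = 1) :
    ∑ x, (p x - 1 / Fintype.card ι) ^ 2 = ∑ x, p x ^ 2 - 1 / Fintype.card ι := by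
  simp only [sub_sq, Finset.sum_add_distrib, Finset.sum_sub_distrib, ← Finset.sum_mul,
    ← Finset.mul_sum, hp, Finset.sum_const, Finset.card_univ, nsmul_eq_mul]
  rcases eq_or_ne (Fintype.card ι : ℝ) 0 with h | h
  · simp [h]
  · field_simp; ring

section HilbertSchmidt

variable {ι : Type*} [Fintype ι]

/-- `|w⟩⟨w|` as a vector of the Hilbert–Schmidt space, whose inner product is `tr (A† B)`. -/
def outerVec (w : EuclideanSpace ℂ ι) : EuclideanSpace ℂ (ι × ι) :=
  WithLp.toLp 2 fun p => w p.1 * conj (w p.2)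

def identityVec (ι : Type*) [Fintype ι] [DecidableEq ι] : EuclideanSpace ℂ (ι × ι) :=
  WithLp.toLp 2 fun p => if p.1 = p.2 then 1 else 0

theorem inner_outerVec_outerVec (u w : EuclideanSpace ℂ ι) :
    ⟪outerVec u, outerVec w⟫_ℂ = (‖⟪u, w⟫_ℂ‖ ^ 2 : ℝ) := by
  have hinner : ⟪u, w⟫_ℂ = ∑ i, conj (u i) * w i := by
    simp [PiLp.inner_apply, RCLike.inner_apply, mul_comm]
  rw [Complex.ofReal_pow, ← Complex.mul_conj', hinner, map_sum, Finset.sum_mul_sum]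
  simp only [PiLp.inner_apply, outerVec, RCLike.inner_apply, Fintype.sum_prod_type, map_mul,
    Complex.conj_conj]
  refine Finset.sum_congr rfl fun i _ => Finset.sum_congr rfl fun j _ => by ring

theorem inner_outerVec_identityVec [DecidableEq ι] (w : EuclideanSpace ℂ ι) :
    ⟪outerVec w, identityVec ι⟫_ℂ = (‖w‖ ^ 2 : ℝ) := by
  rw [EuclideanSpace.norm_sq_eq, Complex.ofReal_sum]
  simp [PiLp.inner_apply, outerVec, identityVec, RCLike.inner_apply, Fintype.sum_prod_type,
    Complex.conj_mul']

theorem norm_sq_identityVec [DecidableEq ι] : ‖identityVec ι‖ ^ 2 = Fintype.card ι := by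
  rw [EuclideanSpace.norm_sq_eq, Fintype.sum_prod_type]
  simp [identityVec, apply_ite norm]

theorem norm_sq_outerVec (w : EuclideanSpace ℂ ι) : ‖outerVec w‖ ^ 2 = ‖w‖ ^ 4 := by
  rw [← inner_self_eq_norm_sq (𝕜 := ℂ), inner_outerVec_outerVec]
  simp [inner_self_eq_norm_sq_to_K, ← pow_mul, ← Complex.ofReal_pow]

theorem norm_sq_outerVec_sub_smul_identityVec [DecidableEq ι] {Ψ : EuclideanSpace ℂ ι}
    (hΨ : ‖Ψ‖ = 1) :
    ‖outerVec Ψ - ((1 / Fintype.card ι : ℝ) : ℂ) • identityVec ι‖ ^ 2 =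
      1 - 1 / Fintype.card ι := by
  rw [norm_sub_sq (𝕜 := ℂ), inner_smul_right, inner_outerVec_identityVec, norm_smul,
    mul_pow, norm_sq_identityVec, norm_sq_outerVec, hΨ]
  simp only [one_pow, one_div, Complex.ofReal_inv, Complex.ofReal_natCast, Complex.ofReal_one,
    mul_one, inv_re, natCast_re, normSq_to_complex, Complex.normSq_natCast, norm_inv,
    RCLike.norm_natCast, inv_pow]
  rw [← div_eq_inv_mul, sq, div_self_mul_self']
  ring

theorem inner_outerVec_outerVec_of_unbiased {κ : Type*} [DecidableEq ι] [DecidableEq κ]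
    {v : κ → ι → EuclideanSpace ℂ ι} (horth : ∀ b, Orthonormal ℂ (v b)) {r : ℝ}
    (hmub : ∀ b b', b ≠ b' → ∀ x x', ‖⟪v b x, v b' x'⟫_ℂ‖ ^ 2 = r) (q q' : κ × ι) :
    ⟪outerVec (v q.1 q.2), outerVec (v q'.1 q'.2)⟫_ℂ =
      if q.1 = q'.1 then (if q = q' then 1 else 0) else (r : ℂ) := by
  obtain ⟨b, x⟩ := q
  obtain ⟨b', x'⟩ := q'
  rw [inner_outerVec_outerVec]
  by_cases hb : b = b'
  · subst hb
    rw [orthonormal_iff_ite.mp (horth b) x x']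
    by_cases hx : x = x' <;> simp [hx]
  · simp [hb, hmub b b' hb x x']

end HilbertSchmidt

theorem sum_sum_norm_inner_pow_four_le {ι κ : Type*} [Fintype ι] [DecidableEq ι] [Fintype κ]
    (v : κ → ι → EuclideanSpace ℂ ι) (horth : ∀ b, Orthonormal ℂ (v b))
    (hmub : ∀ b b', b ≠ b' → ∀ x x', ‖⟪v b x, v b' x'⟫_ℂ‖ ^ 2 = 1 / (Fintype.card ι : ℝ))
    (Ψ : EuclideanSpace ℂ ι) (hΨ : ‖Ψ‖ = 1) :
    ∑ b, ∑ x, ‖⟪v b x, Ψ⟫_ℂ‖ ^ 4 ≤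
      (Fintype.card κ + Fintype.card ι - 1) / Fintype.card ι := by
  classical
  set d : ℝ := (Fintype.card ι : ℝ) with hd_def
  have hd : d ≠ 0 := by
    have : Nonempty ι := by
      by_contra h
      rw [not_nonempty_iff] at h
      simp [Subsingleton.elim Ψ 0] at hΨ
    simp [d]
  set p : κ → ι → ℝ := fun b x => ‖⟪v b x, Ψ⟫_ℂ‖ ^ 2
  have hp : ∀ b, ∑ x, p b x = 1 := fun b => by
    simp [p, (horth b).sum_sq_norm_inner_of_card_eq_finrank (by simp) Ψ, hΨ]
  set c : κ × ι → ℝ := fun q => p q.1 q.2 - 1 / d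
  have hc : ∀ b, ∑ x, c (b, x) = 0 := fun b => by
    simp [c, Finset.sum_sub_distrib, hp b, d, hd]
  -- the traceless part `ρ - 1/d` of `ρ = |Ψ⟩⟨Ψ|`
  set a := outerVec Ψ - ((1 / d : ℝ) : ℂ) • identityVec ι
  have ha : ∀ q, ⟪outerVec (v q.1 q.2), a⟫_ℂ = c q := fun q => by
    rw [inner_sub_right, inner_smul_right, inner_outerVec_outerVec, inner_outerVec_identityVec,
      (horth q.1).1 q.2]
    push_cast [c, p]
    ring
  have hbessel := sum_sq_le_norm_sq_of_inner_eq ha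
    (inner_sum_smul_of_block_gram (inner_outerVec_outerVec_of_unbiased horth hmub) hc)
  rw [norm_sq_outerVec_sub_smul_identityVec hΨ] at hbessel
  calc ∑ b, ∑ x, ‖⟪v b x, Ψ⟫_ℂ‖ ^ 4 = ∑ b, (∑ x, c (b, x) ^ 2 + 1 / d) := by
        refine Finset.sum_congr rfl fun b _ => ?_
        rw [sum_sub_one_div_card_sq (hp b)]
        simp [p, ← pow_mul, hd_def]
    _ = ∑ q, c q ^ 2 + Fintype.card κ / d := by
        rw [Finset.sum_add_distrib, Fintype.sum_prod_type]
        simp [div_eq_mul_inv]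
    _ ≤ 1 - 1 / d + Fintype.card κ / d := by gcongr; exact hbessel
    _ = (Fintype.card κ + d - 1) / d := by field_simp; ring

theorem neg_log_div_card_le_mean_neg_log {κ : Type*} [Fintype κ] [Nonempty κ] {s : κ → ℝ}
    {M : ℝ} (hs : ∀ b, 0 < s b) (hM : ∑ b, s b ≤ M) :
    -Real.log (M / Fintype.card κ) ≤ (1 / Fintype.card κ) * ∑ b, -Real.log (s b) := by
  have hL : (0 : ℝ) < Fintype.card κ := by exact_mod_cast Fintype.card_pos
  have hjensen : ∑ b, (1 / (Fintype.card κ : ℝ)) • Real.log (s b) ≤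
      Real.log (∑ b, (1 / (Fintype.card κ : ℝ)) • s b) :=
    strictConcaveOn_log_Ioi.concaveOn.le_map_sum (fun _ _ => by positivity)
      (by simp [Finset.card_univ, hL.ne']) (fun b _ => hs b)
  have hmean : Real.log (∑ b, (1 / (Fintype.card κ : ℝ)) • s b) ≤
      Real.log (M / Fintype.card κ) := by
    rw [← Finset.smul_sum, smul_eq_mul, one_div_mul_eq_div]
    have hsum : 0 < ∑ b, s b := Finset.sum_pos (fun b _ => hs b) Finset.univ_nonempty
    exact Real.log_le_log (by positivity) (by gcongr)
  rw [← Finset.smul_sum, smul_eq_mul] at hjensen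
  rw [Finset.sum_neg_distrib]
  linarith

/-- Collision-entropy uncertainty relation for MUBs: for any `L` mutually unbiased bases
of `ℂ^d`, `d = 2ⁿ`, and any pure state `Ψ`,
`(1/L) Σ_b H₂(B_b|Ψ) ≥ -log((L + d - 1)/(dL))`; equivalently
`Σ_b Σ_x |⟨x_b|Ψ⟩|⁴ ≤ (L + d - 1)/d`. -/
theorem collision_entropy_mub_uncertainty {n L : ℕ} (hL : 0 < L)
    (v : Fin L → Fin (2 ^ n) → EuclideanSpace ℂ (Fin (2 ^ n)))
    (horth : ∀ b, Orthonormal ℂ (v b))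
    (hmub : ∀ b b', b ≠ b' → ∀ x x',
      ‖(inner ℂ (v b x) (v b' x') : ℂ)‖ ^ 2 = 1 / (2 ^ n : ℝ))
    (Ψ : EuclideanSpace ℂ (Fin (2 ^ n))) (hΨ : ‖Ψ‖ = 1) :
    (-Real.log (((L : ℝ) + 2 ^ n - 1) / (2 ^ n * L)) ≤
      (1 / (L : ℝ)) * ∑ b, -Real.log (∑ x, ‖(inner ℂ (v b x) Ψ : ℂ)‖ ^ 4)) ∧
    (∑ b, ∑ x, ‖(inner ℂ (v b x) Ψ : ℂ)‖ ^ 4 ≤ ((L : ℝ) + 2 ^ n - 1) / 2 ^ n) := by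
  have hcard : (Fintype.card (Fin (2 ^ n)) : ℝ) = 2 ^ n := by simp
  have hbound : ∑ b, ∑ x, ‖⟪v b x, Ψ⟫_ℂ‖ ^ 4 ≤ ((L : ℝ) + 2 ^ n - 1) / 2 ^ n := by
    simpa [hcard] using sum_sum_norm_inner_pow_four_le v horth (by simpa [hcard] using hmub) Ψ hΨ
  have : Nonempty (Fin L) := ⟨⟨0, hL⟩⟩
  have hpos : ∀ b, 0 < ∑ x, ‖⟪v b x, Ψ⟫_ℂ‖ ^ 4 := fun b =>
    (horth b).sum_norm_inner_pow_four_pos (by simp) (by simp [← norm_ne_zero_iff, hΨ])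
  refine ⟨?_, hbound⟩
  simpa [div_div, mul_comm] using neg_log_div_card_le_mean_neg_log hpos hbound
end
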